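/- arXiv:1309.1625 — 2 statements merged into one kernel-verified Lean document; each statement's English description precedes it below -/
import Mathlib

section
/- Let N = 2^n - 1 with n ≥ 2, and let s be a binary sequence of period N whose support set is an (N, (N+1)/2, (N+1)/4) cyclic difference set. Let A be the circulant matrix of s. Then gcd(2^N - 1, det(A)) = 1, and consequently gcd(P_s(2), 2^N - 1) = 1, i.e. the 2-adic complexity of s equals N. -/
/-! If `A` is the circulant matrix of the indicator of an `(N, 2l, l)` difference set, the
difference-set property says exactly that `A Aᵀ = l (I + J)`, so `(det A)² = l ^ N (N + 1)`. For
`N = 2 ^ n - 1` this is a power of `2`, hence `det A` is prime to the odd number `2 ^ N - 1`.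
Modulo `2 ^ N - 1` the vector `(2 ^ i)ᵢ` is a left eigenvector of `A` with eigenvalue `P_s(2)`,
so `P_s(2)` divides `det A` there, and coprimality passes from `det A` to `P_s(2)`. -/

open Matrix Finset

section DifferenceSet

variable {G R : Type*} [AddCommGroup G] [Fintype G] [DecidableEq G]

section Semiring

variable [Semiring R]

theorem sum_indicator_mul_indicator_sub (D : Finset G) (i : G) :
    ∑ j, (if i - j ∈ D then (1 : R) else 0) * (if -j ∈ D then 1 else 0) =
      #(D ∩ D.image (· + i)) := by
  have hmem : ∀ x, x ∈ D.image (· + i) ↔ x - i ∈ D := fun x => by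
    rw [mem_image]
    exact ⟨fun ⟨y, hy, hyx⟩ => by rwa [← hyx, add_sub_cancel_right],
      fun hx => ⟨x - i, hx, sub_add_cancel x i⟩⟩
  calc ∑ j, (if i - j ∈ D then (1 : R) else 0) * (if -j ∈ D then 1 else 0)
      = ∑ x, (if x ∈ D then (1 : R) else 0) * if x - i ∈ D then 1 else 0 :=
        Fintype.sum_equiv (Equiv.subLeft i) _ _ fun x => by simp
    _ = ∑ x, if x ∈ D ∩ D.image (· + i) then (1 : R) else 0 := by
        simp only [mem_inter, hmem, ite_zero_mul_ite_zero, mul_one]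
    _ = #(D ∩ D.image (· + i)) := by rw [sum_boole, filter_mem_eq_inter, univ_inter]

theorem circulant_indicator_mul_transpose (D : Finset G) :
    circulant (fun i => if i ∈ D then (1 : R) else 0) *
        (circulant fun i => if i ∈ D then (1 : R) else 0)ᵀ =
      circulant fun i => (#(D ∩ D.image (· + i)) : R) := by
  rw [transpose_circulant, circulant_mul]
  congr 1
  funext i
  simp only [mulVec, dotProduct, circulant_apply, sum_indicator_mul_indicator_sub]

end Semiring

variable [CommRing R]

theorem det_one_add_circulant_one :
    (1 + circulant fun _ : G => (1 : R)).det = 1 + Fintype.card G := by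
  have hJ : circulant (fun _ : G => (1 : R)) =
      replicateCol Unit (fun _ : G => (1 : R)) * replicateRow Unit (fun _ : G => (1 : R)) := by
    ext i j
    simp [mul_apply]
  rw [hJ, det_one_add_replicateCol_mul_replicateRow]
  simp [dotProduct]

theorem det_circulant_ite_two_mul (b : R) :
    (circulant fun i : G => if i = 0 then 2 * b else b).det =
      b ^ Fintype.card G * (1 + Fintype.card G) := by
  have hfun : (fun i : G => if i = 0 then 2 * b else b) =
      b • (Pi.single 0 1 + fun _ => 1) := by
    funext i
    by_cases hi : i = 0 <;> simp [hi]; ring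
  rw [hfun, circulant_smul, det_smul, circulant_add, circulant_single_one,
    det_one_add_circulant_one]

theorem det_circulant_indicator_sq (D : Finset G) (l : ℕ) (hk : #D = 2 * l)
    (hl : ∀ τ ≠ 0, #(D ∩ D.image (· + τ)) = l) :
    (circulant fun i => if i ∈ D then (1 : R) else 0).det ^ 2 =
      (l : R) ^ Fintype.card G * (1 + Fintype.card G) := by
  have hgram : (fun i : G => (#(D ∩ D.image (· + i)) : R)) =
      fun i => if i = 0 then 2 * (l : R) else l := by
    funext i
    split_ifs with hi
    · rw [hi]; simp [hk]
    · rw [hl i hi]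
  have hdet := congrArg det (circulant_indicator_mul_transpose (R := R) D)
  rwa [det_mul, det_transpose, hgram, det_circulant_ite_two_mul, ← sq] at hdet

end DifferenceSet

theorem pow_val_add_of_pow_eq_one {M : Type*} [Monoid M] {N : ℕ} [NeZero N] {x : M}
    (hx : x ^ N = 1) (a b : ZMod N) :
    x ^ (a + b).val = x ^ a.val * x ^ b.val := by
  rw [ZMod.val_add, ← pow_eq_pow_mod _ hx, pow_add]

theorem sum_range_eq_sum_zmod_val {M : Type*} [AddCommMonoid M] {N : ℕ} [NeZero N]
    (f : ℕ → M) : ∑ i ∈ range N, f i = ∑ k : ZMod N, f k.val :=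
  sum_nbij' Nat.cast ZMod.val (fun i hi => mem_univ _)
    (fun k _ => mem_range.mpr (ZMod.val_lt k))
    (fun i hi => ZMod.val_cast_of_lt (mem_range.mp hi)) (fun k _ => ZMod.natCast_zmod_val k)
    (fun i hi => by rw [ZMod.val_cast_of_lt (mem_range.mp hi)])

section Circulant

variable {R : Type*} [CommRing R] {N : ℕ} [NeZero N] {x : R}

theorem vecMul_circulant_pow_val (hx : x ^ N = 1) (s : ZMod N → R) :
    (fun i : ZMod N => x ^ i.val) ᵥ* circulant s =
      (∑ k, s k * x ^ k.val) • fun i : ZMod N => x ^ i.val := by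
  funext j
  simp only [vecMul, dotProduct, circulant_apply, Pi.smul_apply, smul_eq_mul, sum_mul]
  exact Fintype.sum_equiv (Equiv.subRight j) _ _ fun i => by
    rw [Equiv.subRight_apply, mul_assoc, ← pow_val_add_of_pow_eq_one hx, sub_add_cancel, mul_comm]

theorem sum_mul_pow_dvd_det_circulant (hx : x ^ N = 1) (s : ZMod N → R) :
    (∑ i ∈ range N, s i * x ^ i) ∣ (circulant s).det := by
  set w := fun i : ZMod N => x ^ i.val
  have hdet :
      (circulant s).det • w = (∑ k, s k * x ^ k.val) • (w ᵥ* (circulant s).adjugate) := by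
    rw [← smul_vecMul, ← vecMul_circulant_pow_val hx, vecMul_vecMul, mul_adjugate,
      vecMul_smul, vecMul_one]
  refine ⟨(w ᵥ* (circulant s).adjugate) 0, ?_⟩
  simpa [w, sum_range_eq_sum_zmod_val] using congrFun hdet 0

end Circulant

theorem isCoprime_of_odd_of_sq_eq_two_pow {a b : ℤ} {k : ℕ} (ha : Odd a) (hb : b ^ 2 = 2 ^ k) :
    IsCoprime a b :=
  IsCoprime.of_mul_right_left (z := b) <| by
    rw [← sq, hb]
    exact (Int.isCoprime_two_right.mpr ha).pow_right

theorem IsCoprime.of_mk_dvd_mk {R : Type*} [CommRing R] {m a b : R} (hb : IsCoprime m b)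
    (hdvd : Ideal.Quotient.mk (Ideal.span {m}) a ∣ Ideal.Quotient.mk (Ideal.span {m}) b) :
    IsCoprime a m := by
  obtain ⟨y, hy⟩ := hdvd
  obtain ⟨y, rfl⟩ := Ideal.Quotient.mk_surjective y
  rw [← map_mul, Ideal.Quotient.eq, Ideal.mem_span_singleton'] at hy
  obtain ⟨t, ht⟩ := hy
  have hay : a * y = b + m * -t := by linear_combination ht
  exact (hay ▸ hb.add_mul_left_right (-t)).of_mul_right_left.symm

theorem isCoprime_sum_mul_pow_of_isCoprime_det {N : ℕ} [NeZero N] (s : ZMod N → ℤ) (a : ℤ)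
    (h : IsCoprime (a ^ N - 1) (circulant s).det) :
    IsCoprime (∑ i ∈ range N, s i * a ^ i) (a ^ N - 1) := by
  set π := Ideal.Quotient.mk (Ideal.span {a ^ N - 1})
  have ha : π a ^ N = 1 := by
    rw [← map_pow, ← sub_eq_zero, ← map_one π, ← map_sub, Ideal.Quotient.eq_zero_iff_mem]
    exact Ideal.mem_span_singleton_self _
  have hdvd := sum_mul_pow_dvd_det_circulant ha fun i => π (s i)
  rw [← map_circulant, ← RingHom.mapMatrix_apply, ← RingHom.map_det] at hdvd
  refine h.of_mk_dvd_mk ?_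
  simpa only [map_sum, map_mul, map_pow] using hdvd

theorem stmt6 (n N : ℕ) (hn : 2 ≤ n) (hN : N = 2 ^ n - 1) [NeZero N]
    (s : ZMod N → ℤ) (hbin : ∀ i, s i = 0 ∨ s i = 1)
    (hcard : (Finset.univ.filter fun i : ZMod N => s i = 1).card = (N + 1) / 2)
    (hdiff : ∀ τ : ZMod N, τ ≠ 0 →
      ((Finset.univ.filter fun i : ZMod N => s i = 1) ∩
        ((Finset.univ.filter fun i : ZMod N => s i = 1)).image (· + τ)).card = (N + 1) / 4) :
    Int.gcd (2 ^ N - 1) (Matrix.circulant s).det = 1 ∧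
    Int.gcd (∑ i ∈ Finset.range N, s (i : ZMod N) * 2 ^ i) (2 ^ N - 1) = 1 := by
  set D := univ.filter fun i : ZMod N => s i = 1
  have hs : s = fun i => if i ∈ D then 1 else 0 := by
    funext i
    rcases hbin i with h | h <;> simp [D, h]
  have hpow : 2 ^ n = 4 * 2 ^ (n - 2) := by
    rw [show 4 = 2 ^ 2 by rfl, ← pow_add, Nat.add_sub_cancel' hn]
  have hN1 : N + 1 = 2 ^ n := by
    have := Nat.one_le_two_pow (n := n)
    omega
  have hdet : (circulant s).det ^ 2 = 2 ^ ((n - 2) * N + n) := by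
    rw [hs, det_circulant_indicator_sq D (2 ^ (n - 2)) (by omega)
      fun τ hτ => by rw [hdiff τ hτ]; omega, ZMod.card, pow_add, pow_mul]
    push_cast
    rw [add_comm, ← Nat.cast_one (R := ℤ), ← Nat.cast_add, hN1]
    norm_num
  have hodd : Odd ((2 : ℤ) ^ N - 1) := (even_two.pow_of_ne_zero (NeZero.ne N)).sub_odd odd_one
  have hcop := isCoprime_of_odd_of_sq_eq_two_pow hodd hdet
  exact ⟨Int.isCoprime_iff_gcd_eq_one.mp hcop,
    Int.isCoprime_iff_gcd_eq_one.mp (isCoprime_sum_mul_pow_of_isCoprime_det s 2 hcop)⟩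
end

section
/- Let s be a binary sequence of period N whose support set D_s is an (N, (N+1)/2, (N+1)/4) cyclic difference set, and let p be an odd prime with p ∤ (N+1). Then gcd(P_s(x), 1-x^N) = 1 in F_p[x]; equivalently, the linear complexity of s over F_p equals N. -/
/-! If `x` is an `N`-th root of unity in an algebraic closure of `𝔽_p`, then `P_s(x) = ∑_{a ∈ D} ψ a`
for the additive character `ψ τ = x ^ τ` of `ZMod N`. For `ψ = 1` this is `k = (N + 1) / 2`; otherwise
`P_s(x) P_s(x⁻¹) = ∑_τ #(D ∩ (D + τ)) ψ τ = k - λ = (N + 1) / 4`, by orthogonality `∑_τ ψ τ = 0`.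
Neither value vanishes mod `p`, so `P_s` and `1 - X ^ N` have no common root. -/

open Polynomial Finset

section DifferenceSet

variable {G : Type*} [AddCommGroup G] [DecidableEq G]

/-- `#(D ∩ (D + τ))` counts the representations `τ = a - b` with `a, b ∈ D`. -/
def IsDifferenceSet (D : Finset G) (k l : ℕ) : Prop :=
  #D = k ∧ ∀ τ ≠ 0, #(D ∩ D.image (· + τ)) = l

theorem Finset.filter_sub_mem_eq_inter_image_add (D : Finset G) (τ : G) :
    D.filter (fun a => a - τ ∈ D) = D ∩ D.image (· + τ) := by
  ext a
  simp only [mem_filter, mem_inter, mem_image]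
  exact and_congr_right fun _ => ⟨fun h => ⟨a - τ, h, sub_add_cancel a τ⟩,
    fun ⟨b, hb, hba⟩ => by rwa [← hba, add_sub_cancel_right]⟩

variable [Fintype G] {R : Type*} [CommRing R]

theorem AddChar.sum_mul_sum_neg_eq_sum_card_inter (D : Finset G) (ψ : AddChar G R) :
    (∑ a ∈ D, ψ a) * ∑ b ∈ D, ψ (-b) = ∑ τ, (#(D ∩ D.image (· + τ)) : R) * ψ τ := by
  have inner (a : G) : ∑ b ∈ D, ψ (a - b) = ∑ τ, if a - τ ∈ D then ψ τ else 0 := by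
    rw [← sum_filter]
    exact sum_nbij' (a - ·) (a - ·) (by simp) (by simp) (by simp) (by simp) (by simp)
  calc (∑ a ∈ D, ψ a) * ∑ b ∈ D, ψ (-b)
      = ∑ a ∈ D, ∑ b ∈ D, ψ (a - b) := by
        simp only [sum_mul_sum, sub_eq_add_neg, AddChar.map_add_eq_mul]
    _ = ∑ τ, ∑ a ∈ D, if a - τ ∈ D then ψ τ else 0 := by
        simp only [inner]; exact sum_comm
    _ = ∑ τ, (#(D ∩ D.image (· + τ)) : R) * ψ τ := by
        simp only [← sum_filter, sum_const, filter_sub_mem_eq_inter_image_add, nsmul_eq_mul]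

theorem IsDifferenceSet.sum_mul_sum_neg_eq [IsDomain R] {D : Finset G} {k l : ℕ}
    (hD : IsDifferenceSet D k l) {ψ : AddChar G R} (hψ : ψ ≠ 1) :
    (∑ a ∈ D, ψ a) * ∑ b ∈ D, ψ (-b) = k - l := by
  have hterm (τ : G) : (#(D ∩ D.image (· + τ)) : R) * ψ τ
      = (k - l : R) * (if τ = 0 then 1 else 0) + l * ψ τ := by
    rcases eq_or_ne τ 0 with rfl | hτ
    · simp [hD.1]
    · rw [hD.2 τ hτ]; simp [hτ]
  rw [AddChar.sum_mul_sum_neg_eq_sum_card_inter, sum_congr rfl fun τ _ => hterm τ, sum_add_distrib,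
    ← mul_sum, ← mul_sum, AddChar.sum_eq_zero_of_ne_one hψ]
  simp

theorem IsDifferenceSet.sum_addChar_ne_zero [IsDomain R] {D : Finset G} {k l : ℕ}
    (hD : IsDifferenceSet D k l) (hk : (k : R) ≠ 0) (hkl : (k : R) - l ≠ 0) (ψ : AddChar G R) :
    ∑ a ∈ D, ψ a ≠ 0 := by
  rcases eq_or_ne ψ 1 with rfl | hψ
  · simpa [hD.1] using hk
  · exact left_ne_zero_of_mul (hD.sum_mul_sum_neg_eq hψ ▸ hkl)

end DifferenceSet

theorem ZMod.sum_range_natCast {M : Type*} [AddCommMonoid M] (N : ℕ) [NeZero N]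
    (f : ZMod N → M) :
    ∑ i ∈ range N, f i = ∑ τ, f τ :=
  sum_nbij' Nat.cast ZMod.val (by simp) (by simp [ZMod.val_lt])
    (fun i hi => ZMod.val_cast_of_lt (mem_range.mp hi)) (by simp) (by simp)

theorem aeval_sum_range_eq_sum_zmodChar {R K : Type*} [CommSemiring R] [CommSemiring K]
    [Algebra R K] (N : ℕ) [NeZero N] (f : ZMod N → R) {x : K} (hx : x ^ N = 1) :
    aeval x (∑ i ∈ range N, C (f i) * X ^ i) =
      ∑ τ, algebraMap R K (f τ) * AddChar.zmodChar N hx τ := by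
  rw [map_sum, ← ZMod.sum_range_natCast]
  refine sum_congr rfl fun i _ => ?_
  rw [map_mul, aeval_C, aeval_X_pow, AddChar.zmodChar_apply']

theorem isCoprime_one_sub_X_pow_of_aeval_ne_zero {F : Type*} [Field F] (N : ℕ) (P : F[X])
    (h : ∀ x : AlgebraicClosure F, x ^ N = 1 → aeval x P ≠ 0) : IsCoprime P (1 - X ^ N) := by
  refine (isCoprime_iff_aeval_ne_zero_of_isAlgClosed F (AlgebraicClosure F) _ _).mpr fun x => ?_
  by_cases hx : x ^ N = 1
  · exact Or.inl (h x hx)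
  · exact Or.inr (by rwa [map_sub, map_one, map_pow, aeval_X, sub_ne_zero, ne_comm])

theorem sum_intCast_mul_eq_sum_filter_of_binary {G R : Type*} [Fintype G] [Ring R] {s : G → ℤ}
    (hbin : ∀ i, s i = 0 ∨ s i = 1) (g : G → R) :
    ∑ i, (s i : R) * g i = ∑ i ∈ univ.filter (s · = 1), g i := by
  rw [sum_filter]
  refine sum_congr rfl fun i _ => ?_
  rcases hbin i with h | h <;> simp [h]

theorem stmt18_general (N : ℕ) [NeZero N] (hN4 : N % 4 = 3) (s : ZMod N → ℤ)
    (hbin : ∀ i, s i = 0 ∨ s i = 1)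
    (hcard : (Finset.univ.filter fun i : ZMod N => s i = 1).card = (N + 1) / 2)
    (hdiff : ∀ τ : ZMod N, τ ≠ 0 →
      ((Finset.univ.filter fun i : ZMod N => s i = 1) ∩
        ((Finset.univ.filter fun i : ZMod N => s i = 1)).image (· + τ)).card = (N + 1) / 4)
    (p : ℕ) [Fact p.Prime] (hpN : ¬ p ∣ (N + 1)) :
    IsCoprime (∑ i ∈ Finset.range N, C ((s (i : ZMod N) : ZMod p)) * X ^ i)
        (1 - X ^ N : (ZMod p)[X]) ∧
    N - (EuclideanDomain.gcd
        (∑ i ∈ Finset.range N, C ((s (i : ZMod N) : ZMod p)) * X ^ i)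
        (1 - X ^ N)).natDegree = N := by
  have hD : IsDifferenceSet _ ((N + 1) / 2) ((N + 1) / 4) := ⟨hcard, hdiff⟩
  have hcast (m : ℕ) (hm : m ∣ N + 1) : (m : AlgebraicClosure (ZMod p)) ≠ 0 := fun h =>
    hpN (((CharP.cast_eq_zero_iff _ p m).mp h).trans hm)
  have hcop : IsCoprime (∑ i ∈ range N, C ((s (i : ZMod N) : ZMod p)) * X ^ i) (1 - X ^ N) := by
    refine isCoprime_one_sub_X_pow_of_aeval_ne_zero N _ fun x hx => ?_
    rw [aeval_sum_range_eq_sum_zmodChar N (fun i => (s i : ZMod p)) hx]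
    simp only [map_intCast, sum_intCast_mul_eq_sum_filter_of_binary hbin]
    refine hD.sum_addChar_ne_zero (hcast _ (Nat.div_dvd_of_dvd (by omega))) ?_ _
    rw [show (N + 1) / 2 = 2 * ((N + 1) / 4) by omega, Nat.cast_mul]
    simpa [two_mul] using hcast _ (Nat.div_dvd_of_dvd (by omega))
  refine ⟨hcop, ?_⟩
  rw [natDegree_eq_zero_of_isUnit (EuclideanDomain.gcd_isUnit_iff.mpr hcop), Nat.sub_zero]

theorem stmt18 (N : ℕ) [NeZero N] (hN4 : N % 4 = 3) (s : ZMod N → ℤ)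
    (hbin : ∀ i, s i = 0 ∨ s i = 1)
    (hcard : (Finset.univ.filter fun i : ZMod N => s i = 1).card = (N + 1) / 2)
    (hdiff : ∀ τ : ZMod N, τ ≠ 0 →
      ((Finset.univ.filter fun i : ZMod N => s i = 1) ∩
        ((Finset.univ.filter fun i : ZMod N => s i = 1)).image (· + τ)).card = (N + 1) / 4)
    (p : ℕ) [Fact p.Prime] (hpodd : p ≠ 2) (hpN : ¬ p ∣ (N + 1)) :
    IsCoprime (∑ i ∈ Finset.range N, C ((s (i : ZMod N) : ZMod p)) * X ^ i)
        (1 - X ^ N : (ZMod p)[X]) ∧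
    N - (EuclideanDomain.gcd
        (∑ i ∈ Finset.range N, C ((s (i : ZMod N) : ZMod p)) * X ^ i)
        (1 - X ^ N)).natDegree = N :=
  stmt18_general N hN4 s hbin hcard hdiff p hpN
end
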